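/- arXiv:2211.03228 — 2 statements merged into one kernel-verified Lean document; each statement's English description precedes it below -/
import Mathlib

section
/- Let ν be a cardinal and P a poset with connected incomparability graph such that Cov(P restricted to Inc_x(P)) < ν for every x ∈ P, and suppose ν is infinite (closed under finite sups). Let x₀ ∈ P and let Q be the subposet on ↑x₀. Then for every y ∈ Q, Cov(Q \ ↑y) < ν. -/
open Cardinal

/-!
Call `y` good if `↑x₀ \ ↑y` is covered by fewer than `ν` chains; `x₀` is good, as `↑x₀ \ ↑x₀ = ∅`.
If `y` is good and `y'` is incomparable to `y`, then every `z ∈ ↑x₀ \ ↑y'` either lies outside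
`↑y` or satisfies `y ≤ z` and hence is incomparable to `y'`, so `↑x₀ \ ↑y'` is covered by the
chains for `↑x₀ \ ↑y` together with those for `Inc_{y'}(P)`: since `ν` is infinite, `y'` is good.
Connectedness of the incomparability graph spreads goodness from `x₀` to every element.
-/

noncomputable def chainCov {α : Type*} [PartialOrder α] (S : Set α) : Cardinal :=
  sInf {c : Cardinal | ∃ F : Set (Set α),
    (∀ T ∈ F, T ⊆ S ∧ IsChain (· ≤ ·) T) ∧ ⋃₀ F = S ∧ #F = c}

/-- The set of elements of a poset incomparable to `a`. -/
def incSet {α : Type*} [PartialOrder α] (a : α) : Set α := {y | ¬ a ≤ y ∧ ¬ y ≤ a}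

/-- The incomparability graph of a poset. -/
def incGraph (α : Type*) [PartialOrder α] : SimpleGraph α where
  Adj x y := ¬ x ≤ y ∧ ¬ y ≤ x
  symm := ⟨fun _ _ h => ⟨h.2, h.1⟩⟩
  loopless := ⟨fun _ h => h.1 le_rfl⟩

section chainCov

variable {α : Type*} [PartialOrder α]

theorem exists_chain_cover_card_eq_chainCov (S : Set α) :
    ∃ F : Set (Set α),
      (∀ T ∈ F, T ⊆ S ∧ IsChain (· ≤ ·) T) ∧ ⋃₀ F = S ∧ #F = chainCov S := by
  have hsingletons : {c : Cardinal | ∃ F : Set (Set α),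
      (∀ T ∈ F, T ⊆ S ∧ IsChain (· ≤ ·) T) ∧ ⋃₀ F = S ∧ #F = c}.Nonempty := by
    refine ⟨_, (fun a => ({a} : Set α)) '' S, ?_, ?_, rfl⟩
    · rintro T ⟨a, ha, rfl⟩
      exact ⟨Set.singleton_subset_iff.2 ha, Set.subsingleton_singleton.isChain⟩
    · rw [Set.sUnion_image, Set.biUnion_of_singleton]
  exact csInf_mem hsingletons

theorem chainCov_empty : chainCov (∅ : Set α) = 0 :=
  le_antisymm (csInf_le' ⟨∅, by simp, by simp, by simp⟩) zero_le

theorem chainCov_mono {S T : Set α} (h : S ⊆ T) : chainCov S ≤ chainCov T := by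
  obtain ⟨F, hF, hFT, hcard⟩ := exists_chain_cover_card_eq_chainCov T
  have hcover : ⋃₀ ((· ∩ S) '' F) = S := by
    rw [Set.sUnion_image, ← Set.iUnion₂_inter, ← Set.sUnion_eq_biUnion, hFT,
      Set.inter_eq_right.2 h]
  have hchains : ∀ U ∈ (· ∩ S) '' F, U ⊆ S ∧ IsChain (· ≤ ·) U := by
    rintro _ ⟨U, hU, rfl⟩
    exact ⟨Set.inter_subset_right, (hF U hU).2.mono Set.inter_subset_left⟩
  calc chainCov S ≤ #((· ∩ S) '' F) := csInf_le' ⟨_, hchains, hcover, rfl⟩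
    _ ≤ #F := mk_image_le
    _ = chainCov T := hcard

theorem chainCov_union_le (S T : Set α) : chainCov (S ∪ T) ≤ chainCov S + chainCov T := by
  obtain ⟨F, hF, hFS, hcardF⟩ := exists_chain_cover_card_eq_chainCov S
  obtain ⟨G, hG, hGT, hcardG⟩ := exists_chain_cover_card_eq_chainCov T
  have hchains : ∀ U ∈ F ∪ G, U ⊆ S ∪ T ∧ IsChain (· ≤ ·) U := by
    rintro U (hU | hU)
    · exact ⟨(hF U hU).1.trans Set.subset_union_left, (hF U hU).2⟩
    · exact ⟨(hG U hU).1.trans Set.subset_union_right, (hG U hU).2⟩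
  calc chainCov (S ∪ T) ≤ #(F ∪ G : Set (Set α)) :=
        csInf_le' ⟨_, hchains, by rw [Set.sUnion_union, hFS, hGT], rfl⟩
    _ ≤ #F + #G := mk_union_le F G
    _ = chainCov S + chainCov T := by rw [hcardF, hcardG]

end chainCov

theorem diff_Ici_subset_diff_Ici_union_incSet {α : Type*} [PartialOrder α] (A : Set α)
    {y y' : α} (hyy' : ¬ y ≤ y') : A \ Set.Ici y' ⊆ (A \ Set.Ici y) ∪ incSet y' := by
  rintro z ⟨hzA, hy'z⟩
  by_cases hyz : y ≤ z
  · exact Or.inr ⟨hy'z, fun hzy' => hyy' (hyz.trans hzy')⟩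
  · exact Or.inl ⟨hzA, hyz⟩

theorem cov_up_diff_lt {α : Type u} [PartialOrder α] (ν : Cardinal)
    (hν : ℵ₀ ≤ ν)
    (hconn : (incGraph α).Connected)
    (hinc : ∀ x : α, chainCov (incSet x) < ν) (x₀ : α) :
    ∀ y ∈ Set.Ici x₀, chainCov (Set.Ici x₀ \ Set.Ici y) < ν := by
  have hstep : ∀ y y', (incGraph α).Adj y y' →
      chainCov (Set.Ici x₀ \ Set.Ici y) < ν → chainCov (Set.Ici x₀ \ Set.Ici y') < ν :=
    fun y y' hadj hy =>
      calc chainCov (Set.Ici x₀ \ Set.Ici y')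
          ≤ chainCov ((Set.Ici x₀ \ Set.Ici y) ∪ incSet y') :=
            chainCov_mono (diff_Ici_subset_diff_Ici_union_incSet _ hadj.1)
        _ ≤ chainCov (Set.Ici x₀ \ Set.Ici y) + chainCov (incSet y') := chainCov_union_le _ _
        _ < ν := add_lt_of_lt hν hy (hinc y')
  have hbase : chainCov (Set.Ici x₀ \ Set.Ici x₀) < ν := by
    rw [sdiff_self, Set.bot_eq_empty, chainCov_empty]
    exact aleph0_pos.trans_le hν
  rintro y -
  induction (SimpleGraph.reachable_iff_reflTransGen x₀ y).1 (hconn x₀ y) with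
  | refl => exact hbase
  | tail _ hadj ih => exact hstep _ _ hadj ih
end

section
/- Let ν = κ⁺ be an infinite successor cardinal and P a poset with no infinite antichain such that Cov(P) ≥ ν and Cov(P \ ↑x) < ν for every x ∈ P. If (x_α)_{α<β} is a chain in P with β ≤ κ, obtained as an unbounded chain in P, then P cannot be covered by fewer than ν chains using the sets P \ ↑x_α; consequently, every chain of order type ≤ κ in P is bounded above. -/
open Cardinal

/-!
If the chain `C` had no upper bound, every point of `P` would miss `↑x` for some `x ∈ C`, so the
sets `P \ ↑x` (`x ∈ C`) cover `P`. Each is covered by at most `κ` chains, so `P` is covered by at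
most `#C * κ ≤ κ * κ = κ < ν` chains, contradicting `Cov(P) ≥ ν`.
-/

section ChainCover

variable {α : Type u} [PartialOrder α]

def IsChainCover (F : Set (Set α)) (S : Set α) : Prop :=
  (∀ T ∈ F, T ⊆ S ∧ IsChain (· ≤ ·) T) ∧ ⋃₀ F = S

theorem isChainCover_singletons (S : Set α) :
    IsChainCover ((fun a => ({a} : Set α)) '' S) S := by
  refine ⟨?_, by ext; simp⟩
  rintro T ⟨a, ha, rfl⟩
  exact ⟨Set.singleton_subset_iff.2 ha, Set.subsingleton_singleton.isChain⟩

theorem exists_isChainCover_mk_eq (S : Set α) :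
    ∃ F : Set (Set α), IsChainCover F S ∧ #F = chainCov S := by
  obtain ⟨F, hchains, hunion, hcard⟩ : chainCov S ∈ {c | ∃ F : Set (Set α),
      (∀ T ∈ F, T ⊆ S ∧ IsChain (· ≤ ·) T) ∧ ⋃₀ F = S ∧ #F = c} :=
    csInf_mem ⟨_, _, (isChainCover_singletons S).1, (isChainCover_singletons S).2, rfl⟩
  exact ⟨F, ⟨hchains, hunion⟩, hcard⟩

theorem chainCov_le_mk {F : Set (Set α)} {S : Set α} (hF : IsChainCover F S) :
    chainCov S ≤ #F :=
  csInf_le' ⟨F, hF.1, hF.2, rfl⟩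

theorem isChainCover_iUnion {ι : Type*} {F : ι → Set (Set α)} {S : ι → Set α}
    (hF : ∀ i, IsChainCover (F i) (S i)) : IsChainCover (⋃ i, F i) (⋃ i, S i) := by
  refine ⟨?_, ?_⟩
  · simp only [Set.mem_iUnion]
    rintro T ⟨i, hT⟩
    exact ⟨((hF i).1 T hT).1.trans (Set.subset_iUnion S i), ((hF i).1 T hT).2⟩
  · simp only [Set.sUnion_iUnion, (hF _).2]

theorem chainCov_iUnion_le {ι : Type u} (S : ι → Set α) :
    chainCov (⋃ i, S i) ≤ sum fun i => chainCov (S i) := by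
  choose F hF hcard using fun i => exists_isChainCover_mk_eq (S i)
  calc chainCov (⋃ i, S i) ≤ #(⋃ i, F i) := chainCov_le_mk (isChainCover_iUnion hF)
    _ ≤ sum fun i => #(F i) := mk_iUnion_le_sum_mk
    _ = sum fun i => chainCov (S i) := by simp only [hcard]

end ChainCover

theorem iUnion_compl_Ici_eq_univ {α : Type*} [Preorder α] {C : Set α} (hC : ¬BddAbove C) :
    ⋃ x : C, (Set.Ici (x : α))ᶜ = Set.univ := by
  refine Set.eq_univ_of_forall fun b => ?_
  obtain ⟨x, hxC, hxb⟩ := not_bddAbove_iff'.1 hC b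
  exact Set.mem_iUnion.2 ⟨⟨x, hxC⟩, hxb⟩

theorem small_chains_bounded_general {α : Type u} [PartialOrder α] (ν κ : Cardinal)
    (hν : ℵ₀ ≤ ν) (hsucc : ν = Order.succ κ)
    (hcov : ν ≤ chainCov (Set.univ : Set α))
    (hup : ∀ x : α, chainCov (Set.Ici x)ᶜ < ν) :
    ∀ C : Set α, IsChain (· ≤ ·) C → #C ≤ κ → ∃ b : α, ∀ x ∈ C, x ≤ b := by
  intro C _ hCκ
  by_contra hC
  subst hsucc
  have hκ : ℵ₀ ≤ κ := by
    by_contra! h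
    exact (isSuccLimit_aleph0.succ_lt h).not_ge hν
  have hupκ (x : α) : chainCov (Set.Ici x)ᶜ ≤ κ := Order.lt_succ_iff.1 (hup x)
  refine (Order.lt_succ_iff.2 ?_).not_ge hcov
  calc chainCov (Set.univ : Set α)
      = chainCov (⋃ x : C, (Set.Ici (x : α))ᶜ) := by rw [iUnion_compl_Ici_eq_univ hC]
    _ ≤ sum fun x : C => chainCov (Set.Ici (x : α))ᶜ := chainCov_iUnion_le _
    _ ≤ sum fun _ : C => κ := sum_le_sum _ _ fun x => hupκ x
    _ = #C * κ := by rw [sum_const']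
    _ ≤ κ * κ := mul_le_mul_left hCκ κ
    _ = κ := mul_eq_self hκ

theorem small_chains_bounded {α : Type u} [PartialOrder α] (ν κ : Cardinal)
    (hν : ℵ₀ ≤ ν) (hsucc : ν = Order.succ κ)
    (hfa : ∀ A : Set α, IsAntichain (· ≤ ·) A → A.Finite)
    (hcov : ν ≤ chainCov (Set.univ : Set α))
    (hup : ∀ x : α, chainCov (Set.Ici x)ᶜ < ν) :
    ∀ C : Set α, IsChain (· ≤ ·) C → #C ≤ κ → ∃ b : α, ∀ x ∈ C, x ≤ b :=
  small_chains_bounded_general ν κ hν hsucc hcov hup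
end
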